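/- Let Γ be a strictly Deza graph with parameters (n, k, b, a) with k = b + 1 and β(v) > 1 for every vertex v, and let x be a vertex of type (A). If x is of type (A1) with distinguished vertex x* = y, then B(y) equals the set of all vertices lying in N(xᵢ) \ N(x) for some xᵢ ∈ B(x), and y is of type (A). If x is of type (A2) with distinguished vertex x* = z, then B(z) equals the set of all vertices lying in N(x) \ N(xᵢ) for some xᵢ ∈ B(x), and z is of type (A). -/

import Mathlib

open Finset SimpleGraph

universe u v

/-- The number of common neighbours of two vertices. -/
def commonNbrs {V : Type u} [Fintype V] [DecidableEq V] (G : SimpleGraph V)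
    [DecidableRel G.Adj] (x y : V) : ℕ :=
  (G.neighborFinset x ∩ G.neighborFinset y).card

/-- `G` is a Deza graph with parameters `(n, k, b, a)`: a nonempty `k`-regular graph on `n`
vertices in which any two distinct vertices have either `b` or `a` common neighbours,
where `b ≥ a`. -/
def IsDezaGraph {V : Type u} [Fintype V] [DecidableEq V] (G : SimpleGraph V)
    [DecidableRel G.Adj] (n k b a : ℕ) : Prop :=
  G ≠ ⊥ ∧ Fintype.card V = n ∧ G.IsRegularOfDegree k ∧ a ≤ b ∧
    ∀ x y : V, x ≠ y → commonNbrs G x y = b ∨ commonNbrs G x y = a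

/-- `G` is a strictly Deza graph with parameters `(n, k, b, a)`: a Deza graph of
diameter 2 that is not strongly regular. -/
def IsStrictlyDezaGraph {V : Type u} [Fintype V] [DecidableEq V] (G : SimpleGraph V)
    [DecidableRel G.Adj] (n k b a : ℕ) : Prop :=
  IsDezaGraph G n k b a ∧ G.Connected ∧ (∀ x y : V, G.dist x y ≤ 2) ∧
    (∃ x y : V, G.dist x y = 2) ∧ ¬ ∃ ℓ μ : ℕ, G.IsSRGWith n k ℓ μ

/-- `B(v)`: the set of vertices `u ≠ v` having exactly `b` common neighbours with `v`. -/
def dezaB {V : Type u} [Fintype V] [DecidableEq V] (G : SimpleGraph V)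
    [DecidableRel G.Adj] (b : ℕ) (v : V) : Finset V :=
  univ.filter fun u => u ≠ v ∧ commonNbrs G u v = b

/-- `A(v)`: the set of vertices `u ≠ v` having exactly `a` common neighbours with `v`. -/
def dezaA {V : Type u} [Fintype V] [DecidableEq V] (G : SimpleGraph V)
    [DecidableRel G.Adj] (a : ℕ) (v : V) : Finset V :=
  univ.filter fun u => u ≠ v ∧ commonNbrs G u v = a

/-- `B[v] = B(v) ∪ {v}`. -/
def dezaBc {V : Type u} [Fintype V] [DecidableEq V] (G : SimpleGraph V)
    [DecidableRel G.Adj] (b : ℕ) (v : V) : Finset V :=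
  insert v (dezaB G b v)

/-- A vertex `v` is of type (A) if `B(v) ∩ N(v) = ∅`. -/
def IsTypeA {V : Type u} [Fintype V] [DecidableEq V] (G : SimpleGraph V)
    [DecidableRel G.Adj] (b : ℕ) (v : V) : Prop :=
  dezaB G b v ∩ G.neighborFinset v = ∅

/-- A vertex `v` is of type (B) if `B(v) ⊆ N(v)`. -/
def IsTypeB {V : Type u} [Fintype V] [DecidableEq V] (G : SimpleGraph V)
    [DecidableRel G.Adj] (b : ℕ) (v : V) : Prop :=
  dezaB G b v ⊆ G.neighborFinset v

/-- A vertex `v` is of type (C) if `|B(v) ∩ N(v)| = 1`. -/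
def IsTypeC {V : Type u} [Fintype V] [DecidableEq V] (G : SimpleGraph V)
    [DecidableRel G.Adj] (b : ℕ) (v : V) : Prop :=
  (dezaB G b v ∩ G.neighborFinset v).card = 1

/-- A vertex `x` of type (A) is of type (A1) if there exists `y ∈ N(x)` with
`N(x) \ N(xᵢ) = {y}` for every `xᵢ ∈ B(x)`. -/
def IsTypeA1 {V : Type u} [Fintype V] [DecidableEq V] (G : SimpleGraph V)
    [DecidableRel G.Adj] (b : ℕ) (x : V) : Prop :=
  IsTypeA G b x ∧ ∃ y ∈ G.neighborFinset x,
    ∀ xi ∈ dezaB G b x, G.neighborFinset x \ G.neighborFinset xi = {y}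

/-- A vertex `x` of type (A) is of type (A2) if there exists `z ∉ N[x]` with
`N(xᵢ) \ N(x) = {z}` for every `xᵢ ∈ B(x)`. -/
def IsTypeA2 {V : Type u} [Fintype V] [DecidableEq V] (G : SimpleGraph V)
    [DecidableRel G.Adj] (b : ℕ) (x : V) : Prop :=
  IsTypeA G b x ∧ ∃ z ∉ insert x (G.neighborFinset x),
    ∀ xi ∈ dezaB G b x, G.neighborFinset xi \ G.neighborFinset x = {z}

/-- The complete multipartite graph with `m` parts of size `t`. -/
def completeMultipartiteGr (m t : ℕ) : SimpleGraph (Fin m × Fin t) where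
  Adj u v := u.1 ≠ v.1
  symm := ⟨fun _ _ h => Ne.symm h⟩
  loopless := ⟨fun _ h => h rfl⟩

/-- The 2-clique extension of a graph `H`: vertices `(u, i)` and `(v, j)` are adjacent
iff `u ~ v` in `H`, or `u = v` and `i ≠ j`. -/
def cliqueExt2 {W : Type v} (H : SimpleGraph W) : SimpleGraph (W × Fin 2) where
  Adj u v := H.Adj u.1 v.1 ∨ (u.1 = v.1 ∧ u.2 ≠ v.2)
  symm := by
    refine ⟨?_⟩
    intro u v h
    rcases h with h | ⟨h1, h2⟩
    · exact Or.inl h.symm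
    · exact Or.inr ⟨h1.symm, h2.symm⟩
  loopless := by
    refine ⟨?_⟩
    intro u h
    rcases h with h | ⟨_, h2⟩
    · exact H.irrefl h
    · exact h2 rfl

/-!
For `xᵢ ∈ B(x)` the neighbourhoods `N(x)` and `N(xᵢ)`, of size `b + 1` and meeting in `b`
vertices, differ by exchanging one vertex `p ∈ N(x)` for one vertex `q ∈ N(xᵢ)`. A vertex outside
`{x} ∪ B(x)` has `a` common neighbours with both `x` and `xᵢ` (as `B(xᵢ) ⊆ {x} ∪ B(x)`), so it
is adjacent to `p` iff to `q`; under (A1), where every `p` is `y`, or (A2), where every `q` is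
`z`, the other vertices of `B(x)` also see `p` and `q` alike. Hence `N(p)` and `N(q)` differ
exactly in `x` and `xᵢ`: `p` and `q` are non-adjacent with `b` common neighbours. As `xᵢ` varies
the vertices `q` (resp. `p`) are distinct, since distinct vertices never share a neighbourhood,
and `|B(v)|` does not depend on `v` by double counting; so they fill `B(y)` (resp. `B(z)`).
-/
theorem Finset.mem_iff_mem_of_card_inter_eq {α : Type*} [DecidableEq α] {s t r : Finset α}
    {p q : α} (hp : s \ t = {p}) (hq : t \ s = {q}) (h : #(r ∩ s) = #(r ∩ t)) :
    p ∈ r ↔ q ∈ r := by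
  have hs := card_inter_add_card_sdiff (r ∩ s) t
  have ht := card_inter_add_card_sdiff (r ∩ t) s
  rw [inter_sdiff_assoc, hp, inter_singleton] at hs
  rw [inter_sdiff_assoc, hq, inter_singleton, inter_right_comm] at ht
  split_ifs at hs ht <;> simp_all

theorem Finset.eq_of_sdiff_eq_of_sdiff_eq {α : Type*} [DecidableEq α] {s t u : Finset α}
    (h₁ : s \ t = s \ u) (h₂ : t \ s = u \ s) : t = u := by
  rw [← symmDiff_symmDiff_cancel_left s t, ← symmDiff_symmDiff_cancel_left s u,
    symmDiff_def s t, symmDiff_def s u, h₁, h₂]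

section Deza

variable {V : Type u} [Fintype V] [DecidableEq V] {G : SimpleGraph V} [DecidableRel G.Adj]
  {a b k : ℕ} {u v w x : V}

theorem commonNbrs_comm (G : SimpleGraph V) [DecidableRel G.Adj] (x y : V) :
    commonNbrs G x y = commonNbrs G y x := by
  rw [commonNbrs, commonNbrs, inter_comm]

theorem mem_dezaB : u ∈ dezaB G b v ↔ u ≠ v ∧ commonNbrs G u v = b := by
  simp [dezaB]

theorem mem_dezaB_comm : u ∈ dezaB G b v ↔ v ∈ dezaB G b u := by
  rw [mem_dezaB, mem_dezaB, commonNbrs_comm, ne_comm]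

theorem sum_commonNbrs (hreg : G.IsRegularOfDegree k) (v : V) :
    ∑ u, commonNbrs G v u = k * k := by
  have hcount (w : V) : ∑ u, (if w ∈ G.neighborFinset u then 1 else 0) = k := by
    rw [sum_boole, Nat.cast_id, ← hreg.degree_eq w, ← card_neighborFinset_eq_degree]
    congr 1
    ext u
    simp [G.adj_comm]
  calc ∑ u, commonNbrs G v u
      = ∑ u, ∑ w ∈ G.neighborFinset v, if w ∈ G.neighborFinset u then 1 else 0 := by
        simp only [commonNbrs, ← filter_mem_eq_inter, card_filter]
    _ = ∑ w ∈ G.neighborFinset v, k := by rw [sum_comm]; exact sum_congr rfl fun w _ => hcount w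
    _ = k * k := by rw [sum_const, card_neighborFinset_eq_degree, hreg.degree_eq, smul_eq_mul]

theorem card_commonNeighbors_eq_commonNbrs (G : SimpleGraph V) [DecidableRel G.Adj] (v w : V) :
    Fintype.card (G.commonNeighbors v w) = commonNbrs G v w := by
  rw [commonNbrs, ← Set.toFinset_card]
  congr 1
  ext u
  simp [mem_commonNeighbors]

theorem isSRGWith_of_commonNbrs_eq {n ℓ : ℕ} (hcard : Fintype.card V = n)
    (hreg : G.IsRegularOfDegree k) (h : ∀ x y : V, x ≠ y → commonNbrs G x y = ℓ) :
    G.IsSRGWith n k ℓ ℓ where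
  card := hcard
  regular := hreg
  of_adj v w hvw := (card_commonNeighbors_eq_commonNbrs G v w).trans (h v w hvw.ne)
  of_not_adj v w hvw _ := (card_commonNeighbors_eq_commonNbrs G v w).trans (h v w hvw)

/-- A Deza graph with parameters `(|V|, b + 1, b, a)` and `b > a`. -/
structure IsSuccDeza (G : SimpleGraph V) [DecidableRel G.Adj] (b a : ℕ) : Prop where
  regular : G.IsRegularOfDegree (b + 1)
  commonNbrs_eq : ∀ x y : V, x ≠ y → commonNbrs G x y = b ∨ commonNbrs G x y = a
  lt : a < b

theorem IsTypeA.not_adj (hA : IsTypeA G b x) (hu : u ∈ dezaB G b x) : ¬G.Adj x u := fun h =>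
  notMem_empty u (hA ▸ mem_inter.2 ⟨hu, (G.mem_neighborFinset x u).2 h⟩)

namespace IsSuccDeza

variable (hG : IsSuccDeza G b a)
include hG

theorem card_neighborFinset (v : V) : #(G.neighborFinset v) = b + 1 :=
  hG.regular.degree_eq v

theorem commonNbrs_eq_of_notMem (huv : u ≠ v) (hu : u ∉ dezaB G b v) : commonNbrs G u v = a :=
  (hG.commonNbrs_eq u v huv).resolve_left fun h => hu (mem_dezaB.2 ⟨huv, h⟩)

theorem mem_dezaB_of_le_card {s : Finset V} (huv : u ≠ v)
    (hs : s ⊆ G.neighborFinset u ∩ G.neighborFinset v) (hb : b ≤ #s) : u ∈ dezaB G b v := by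
  have := card_le_card hs
  refine mem_dezaB.2 ⟨huv, (hG.commonNbrs_eq u v huv).resolve_right fun h => ?_⟩
  rw [commonNbrs] at h
  have := hG.lt
  omega

theorem eq_of_neighborFinset_eq (h : G.neighborFinset u = G.neighborFinset v) : u = v := by
  by_contra huv
  have hc : commonNbrs G u v = b + 1 := by rw [commonNbrs, h, inter_self, hG.card_neighborFinset]
  have := hG.lt
  rcases hG.commonNbrs_eq u v huv with h' | h' <;> omega

-- `|N(v) ∩ N(u)|` is `b + 1` at `u = v`, `b` on `B(v)` and `a` elsewhere; its sum over `u` is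
-- `(b + 1)²`, which determines `β(v)` since `b > a`.
theorem card_dezaB_eq (u v : V) : #(dezaB G b u) = #(dezaB G b v) := by
  have hsum (v : V) :
      (b + 1) * (b + 1) = (b + 1 - a) + Fintype.card V * a + #(dezaB G b v) * (b - a) := by
    have hsplit (u : V) : commonNbrs G v u =
        (if u = v then b + 1 - a else 0) + a + (if u ∈ dezaB G b v then b - a else 0) := by
      have := hG.lt
      by_cases huv : u = v
      · have hv : v ∉ dezaB G b v := fun h => (mem_dezaB.1 h).1 rfl
        rw [huv, if_pos rfl, if_neg hv, commonNbrs, inter_self, hG.card_neighborFinset]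
        omega
      by_cases hu : u ∈ dezaB G b v
      · rw [commonNbrs_comm, (mem_dezaB.1 hu).2, if_neg huv, if_pos hu]
        omega
      · rw [commonNbrs_comm, hG.commonNbrs_eq_of_notMem huv hu, if_neg huv, if_neg hu,
          zero_add, add_zero]
    rw [← sum_commonNbrs hG.regular v, sum_congr rfl fun u _ => hsplit u, sum_add_distrib,
      sum_add_distrib, sum_ite_eq', if_pos (mem_univ v), sum_const, card_univ, smul_eq_mul,
      sum_ite_mem, univ_inter, sum_const, smul_eq_mul]
  have h := (hsum u).symm.trans (hsum v)
  exact Nat.eq_of_mul_eq_mul_right (Nat.sub_pos_of_lt hG.lt) (by omega)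

theorem card_sdiff_neighborFinset (h : u ∈ dezaB G b v) :
    #(G.neighborFinset v \ G.neighborFinset u) = 1 := by
  have := card_inter_add_card_sdiff (G.neighborFinset v) (G.neighborFinset u)
  rw [inter_comm, ← commonNbrs, (mem_dezaB.1 h).2, hG.card_neighborFinset] at this
  omega

theorem sdiff_neighborFinset_eq_singleton (h : u ∈ dezaB G b v)
    (hw : w ∈ G.neighborFinset v \ G.neighborFinset u) :
    G.neighborFinset v \ G.neighborFinset u = {w} := by
  obtain ⟨w', hw'⟩ := card_eq_one.1 (hG.card_sdiff_neighborFinset h)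
  rw [hw'] at hw ⊢
  rw [mem_singleton.1 hw]

theorem dezaB_subset_insert {xi : V} (hxi : xi ∈ dezaB G b x)
    (h : ∀ xj ∈ dezaB G b x, xj ≠ xi → xj ∈ dezaB G b xi) :
    dezaB G b xi ⊆ insert x (dezaB G b x) := by
  have hx : x ∉ dezaB G b x := fun hx => (mem_dezaB.1 hx).1 rfl
  have hsub : insert x ((dezaB G b x).erase xi) ⊆ dezaB G b xi := by
    refine insert_subset (mem_dezaB_comm.1 hxi) fun xj hxj => ?_
    exact h xj (mem_of_mem_erase hxj) (ne_of_mem_erase hxj)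
  have hcard : #(dezaB G b xi) ≤ #(insert x ((dezaB G b x).erase xi)) := by
    rw [card_insert_of_notMem (fun h => hx (mem_of_mem_erase h)), card_erase_add_one hxi,
      hG.card_dezaB_eq]
  rw [← eq_of_subset_of_card_le hsub hcard]
  exact insert_subset_insert x (erase_subset xi _)

theorem mem_dezaB_and_not_adj (hA : IsTypeA G b x) {xi p q : V} (hxi : xi ∈ dezaB G b x)
    (hp : G.neighborFinset x \ G.neighborFinset xi = {p})
    (hq : G.neighborFinset xi \ G.neighborFinset x = {q})
    (hB : ∀ xj ∈ dezaB G b x, xj ≠ xi → xj ∈ dezaB G b xi)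
    (hothers : ∀ xj ∈ dezaB G b x, xj ≠ xi → (G.Adj xj p ↔ G.Adj xj q)) :
    p ∈ dezaB G b q ∧ ¬G.Adj p q := by
  have hp' : p ∈ G.neighborFinset x \ G.neighborFinset xi := hp ▸ mem_singleton_self p
  have hq' : q ∈ G.neighborFinset xi \ G.neighborFinset x := hq ▸ mem_singleton_self q
  simp only [mem_sdiff, mem_neighborFinset] at hp' hq'
  have hswap (u : V) (hux : u ≠ x) (huxi : u ≠ xi) : G.Adj u p ↔ G.Adj u q := by
    by_cases hu : u ∈ dezaB G b x
    · exact hothers u hu huxi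
    have hu' : u ∉ dezaB G b xi := fun h =>
      (mem_insert.1 (hG.dezaB_subset_insert hxi hB h)).elim hux hu
    have := hG.commonNbrs_eq_of_notMem hux hu
    rw [← hG.commonNbrs_eq_of_notMem huxi hu'] at this
    simpa only [mem_neighborFinset] using mem_iff_mem_of_card_inter_eq hp hq this
  have hpxi : p ≠ xi := fun h => hA.not_adj hxi (h ▸ hp'.1)
  have hnadj : ¬G.Adj p q := fun h => G.irrefl ((hswap p hp'.1.ne' hpxi).2 h)
  refine ⟨hG.mem_dezaB_of_le_card (s := (G.neighborFinset p).erase x)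
    (fun h => hq'.2 (h ▸ hp'.1)) (fun t ht => ?_) ?_, hnadj⟩
  · simp only [mem_erase, mem_neighborFinset] at ht
    have htxi : t ≠ xi := fun h => hp'.2 (h ▸ ht.2.symm)
    simpa only [mem_inter, mem_neighborFinset] using
      ⟨ht.2, ((hswap t ht.1 htxi).1 ht.2.symm).symm⟩
  · rw [card_erase_of_mem ((G.mem_neighborFinset _ _).2 hp'.1.symm), hG.card_neighborFinset]
    omega

theorem dezaB_eq_biUnion_and_isTypeA {t : V} {f : V → Finset V}
    (hcard : ∀ xi ∈ dezaB G b x, #(f xi) = 1)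
    (hdisj : (dezaB G b x : Set V).PairwiseDisjoint f)
    (hmem : ∀ xi ∈ dezaB G b x, ∀ s ∈ f xi, s ∈ dezaB G b t ∧ ¬G.Adj t s) :
    dezaB G b t = (dezaB G b x).biUnion f ∧ IsTypeA G b t := by
  have hsub : (dezaB G b x).biUnion f ⊆ dezaB G b t := fun s hs => by
    obtain ⟨xi, hxi, hs⟩ := mem_biUnion.1 hs
    exact (hmem xi hxi s hs).1
  have heq : dezaB G b t = (dezaB G b x).biUnion f := by
    refine (eq_of_subset_of_card_le hsub ?_).symm
    rw [card_biUnion hdisj, sum_congr rfl hcard, sum_const, smul_eq_mul, mul_one,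
      hG.card_dezaB_eq]
  refine ⟨heq, eq_empty_of_forall_notMem fun s hs => ?_⟩
  obtain ⟨hsB, hsN⟩ := mem_inter.1 hs
  rw [heq] at hsB
  obtain ⟨xi, hxi, hs⟩ := mem_biUnion.1 hsB
  exact (hmem xi hxi s hs).2 ((G.mem_neighborFinset _ _).1 hsN)

theorem dezaB_eq_biUnion_of_typeA1 (hA : IsTypeA G b x) {y : V}
    (hy : ∀ xi ∈ dezaB G b x, G.neighborFinset x \ G.neighborFinset xi = {y}) :
    dezaB G b y = (dezaB G b x).biUnion (fun xi => G.neighborFinset xi \ G.neighborFinset x) ∧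
      IsTypeA G b y := by
  have hy' {xi : V} (hxi : xi ∈ dezaB G b x) : y ∈ G.neighborFinset x \ G.neighborFinset xi :=
    hy xi hxi ▸ mem_singleton_self y
  have hq {xi s : V} (hxi : xi ∈ dezaB G b x)
      (hs : s ∈ G.neighborFinset xi \ G.neighborFinset x) :
      G.neighborFinset xi \ G.neighborFinset x = {s} :=
    hG.sdiff_neighborFinset_eq_singleton (mem_dezaB_comm.1 hxi) hs
  have hinj {xi xj s : V} (hxi : xi ∈ dezaB G b x) (hxj : xj ∈ dezaB G b x)
      (hs : s ∈ G.neighborFinset xi \ G.neighborFinset x)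
      (hs' : s ∈ G.neighborFinset xj \ G.neighborFinset x) : xi = xj :=
    hG.eq_of_neighborFinset_eq <| eq_of_sdiff_eq_of_sdiff_eq (by rw [hy xi hxi, hy xj hxj])
      (by rw [hq hxi hs, hq hxj hs'])
  refine hG.dezaB_eq_biUnion_and_isTypeA
    (fun xi hxi => hG.card_sdiff_neighborFinset (mem_dezaB_comm.1 hxi))
    (fun xi hxi xj hxj hne => disjoint_left.2 fun s hs hs' => hne (hinj hxi hxj hs hs'))
    (fun xi hxi s hs => ?_)
  have hB (xj : V) (hxj : xj ∈ dezaB G b x) (hne : xj ≠ xi) : xj ∈ dezaB G b xi := by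
    refine hG.mem_dezaB_of_le_card hne (s := G.neighborFinset xj ∩ G.neighborFinset x)
      (fun t ht => mem_inter.2 ⟨(mem_inter.1 ht).1, ?_⟩) (mem_dezaB.1 hxj).2.ge
    by_contra htxi
    have : t = y := by simpa [hy xi hxi] using mem_sdiff.2 ⟨(mem_inter.1 ht).2, htxi⟩
    exact (mem_sdiff.1 (hy' hxj)).2 (this ▸ (mem_inter.1 ht).1)
  have hothers (xj : V) (hxj : xj ∈ dezaB G b x) (hne : xj ≠ xi) :
      G.Adj xj y ↔ G.Adj xj s := by
    refine iff_of_false (fun h => (mem_sdiff.1 (hy' hxj)).2 ((G.mem_neighborFinset _ _).2 h))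
      fun h => hne (hinj hxj hxi ?_ hs)
    exact mem_sdiff.2 ⟨(G.mem_neighborFinset _ _).2 h, (mem_sdiff.1 hs).2⟩
  obtain ⟨hyB, hnadj⟩ := hG.mem_dezaB_and_not_adj hA hxi (hy xi hxi) (hq hxi hs) hB hothers
  exact ⟨mem_dezaB_comm.1 hyB, hnadj⟩

theorem dezaB_eq_biUnion_of_typeA2 (hA : IsTypeA G b x) {z : V}
    (hz : ∀ xi ∈ dezaB G b x, G.neighborFinset xi \ G.neighborFinset x = {z}) :
    dezaB G b z = (dezaB G b x).biUnion (fun xi => G.neighborFinset x \ G.neighborFinset xi) ∧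
      IsTypeA G b z := by
  have hz' {xi : V} (hxi : xi ∈ dezaB G b x) : z ∈ G.neighborFinset xi \ G.neighborFinset x :=
    hz xi hxi ▸ mem_singleton_self z
  have hp {xi w : V} (hxi : xi ∈ dezaB G b x)
      (hw : w ∈ G.neighborFinset x \ G.neighborFinset xi) :
      G.neighborFinset x \ G.neighborFinset xi = {w} :=
    hG.sdiff_neighborFinset_eq_singleton hxi hw
  have hinj {xi xj w : V} (hxi : xi ∈ dezaB G b x) (hxj : xj ∈ dezaB G b x)
      (hw : w ∈ G.neighborFinset x \ G.neighborFinset xi)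
      (hw' : w ∈ G.neighborFinset x \ G.neighborFinset xj) : xi = xj :=
    hG.eq_of_neighborFinset_eq <| eq_of_sdiff_eq_of_sdiff_eq (by rw [hp hxi hw, hp hxj hw'])
      (by rw [hz xi hxi, hz xj hxj])
  refine hG.dezaB_eq_biUnion_and_isTypeA (fun xi hxi => hG.card_sdiff_neighborFinset hxi)
    (fun xi hxi xj hxj hne => disjoint_left.2 fun w hw hw' => hne (hinj hxi hxj hw hw'))
    (fun xi hxi w hw => ?_)
  have hB (xj : V) (hxj : xj ∈ dezaB G b x) (hne : xj ≠ xi) : xj ∈ dezaB G b xi := by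
    refine hG.mem_dezaB_of_le_card hne
      (s := G.neighborFinset xj \ (G.neighborFinset x \ G.neighborFinset xi))
      (fun t ht => mem_inter.2 ⟨(mem_sdiff.1 ht).1, ?_⟩) ?_
    · obtain ⟨htxj, ht⟩ := mem_sdiff.1 ht
      by_cases htx : t ∈ G.neighborFinset x
      · by_contra htxi
        exact ht (mem_sdiff.2 ⟨htx, htxi⟩)
      · have : t = z := by simpa [hz xj hxj] using mem_sdiff.2 ⟨htxj, htx⟩
        exact this ▸ (mem_sdiff.1 (hz' hxi)).1
    · have := le_card_sdiff (G.neighborFinset x \ G.neighborFinset xi) (G.neighborFinset xj)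
      rw [hG.card_sdiff_neighborFinset hxi, hG.card_neighborFinset] at this
      omega
  have hothers (xj : V) (hxj : xj ∈ dezaB G b x) (hne : xj ≠ xi) :
      G.Adj xj w ↔ G.Adj xj z := by
    refine iff_of_true ?_ ((G.mem_neighborFinset _ _).1 (mem_sdiff.1 (hz' hxj)).1)
    by_contra h
    have hw' : w ∈ G.neighborFinset x \ G.neighborFinset xj :=
      mem_sdiff.2 ⟨(mem_sdiff.1 hw).1, (G.mem_neighborFinset _ _).not.2 h⟩
    exact hne (hinj hxj hxi hw' hw)
  obtain ⟨hwB, hnadj⟩ := hG.mem_dezaB_and_not_adj hA hxi (hp hxi hw) (hz xi hxi) hB hothers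
  exact ⟨hwB, fun h => hnadj h.symm⟩

end IsSuccDeza

end Deza

theorem stmt11_general {V : Type u} [Fintype V] [DecidableEq V] (G : SimpleGraph V)
    [DecidableRel G.Adj] (n k b a : ℕ)
    (hG : IsStrictlyDezaGraph G n k b a) (hk : k = b + 1) :
    (∀ x y : V, IsTypeA G b x → y ∈ G.neighborFinset x →
      (∀ xi ∈ dezaB G b x, G.neighborFinset x \ G.neighborFinset xi = {y}) →
      dezaB G b y =
        (dezaB G b x).biUnion (fun xi => G.neighborFinset xi \ G.neighborFinset x) ∧
      IsTypeA G b y) ∧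
    (∀ x z : V, IsTypeA G b x → z ∉ insert x (G.neighborFinset x) →
      (∀ xi ∈ dezaB G b x, G.neighborFinset xi \ G.neighborFinset x = {z}) →
      dezaB G b z =
        (dezaB G b x).biUnion (fun xi => G.neighborFinset x \ G.neighborFinset xi) ∧
      IsTypeA G b z) := by
  obtain ⟨⟨-, hcard, hreg, hab, hdich⟩, -, -, -, hnsrg⟩ := hG
  subst hk
  have hlt : a < b := hab.lt_of_ne fun h => hnsrg ⟨b, b, isSRGWith_of_commonNbrs_eq hcard hreg
    fun x y hxy => (hdich x y hxy).elim id (h ▸ ·)⟩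
  have hD : IsSuccDeza G b a := ⟨hreg, hdich, hlt⟩
  exact ⟨fun x y hA _ hy => hD.dezaB_eq_biUnion_of_typeA1 hA hy,
    fun x z hA _ hz => hD.dezaB_eq_biUnion_of_typeA2 hA hz⟩

theorem stmt11 {V : Type u} [Fintype V] [DecidableEq V] (G : SimpleGraph V)
    [DecidableRel G.Adj] (n k b a : ℕ)
    (hG : IsStrictlyDezaGraph G n k b a) (hk : k = b + 1)
    (hβ : ∀ v : V, 1 < (dezaB G b v).card) :
    (∀ x y : V, IsTypeA G b x → y ∈ G.neighborFinset x →
      (∀ xi ∈ dezaB G b x, G.neighborFinset x \ G.neighborFinset xi = {y}) →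
      dezaB G b y =
        (dezaB G b x).biUnion (fun xi => G.neighborFinset xi \ G.neighborFinset x) ∧
      IsTypeA G b y) ∧
    (∀ x z : V, IsTypeA G b x → z ∉ insert x (G.neighborFinset x) →
      (∀ xi ∈ dezaB G b x, G.neighborFinset xi \ G.neighborFinset x = {z}) →
      dezaB G b z =
        (dezaB G b x).biUnion (fun xi => G.neighborFinset x \ G.neighborFinset xi) ∧
      IsTypeA G b z) :=
  stmt11_general G n k b a hG hk
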